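/- With a = (198√3/(5π))^{1/4} and K(t,u) = (1 − (22/17)·sin(π(2t−1)/3)·sin(π(2u−1)/3)) / (a³·(1 + sin(π(2u−1)/3))³) for t,u ∈ [0,1], the system of Hammerstein equations ∫₀¹ K(t,u)·f(u)³ du = g(t), ∫₀¹ K(t,u)·g(u)³ du = f(t) (for all t ∈ [0,1]) has at least two positive continuous solutions (f,g) with f ≠ g; specifically, with f₁(t) = a·(1 + sin(π(2t−1)/3)) and g₁(t) = 1, both (f₁, g₁) and (g₁, f₁) are solutions. -/

import Mathlib

/-!
The substitution `x = π(2u - 1)/3` maps `[0, 1]` onto `[-π/3, π/3]`, where `1 + sin x > 0`.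
Write `s = sin (π(2t - 1)/3)`. Against `f₁³` the denominator of the kernel cancels, leaving
`∫ (1 - (22/17) s sin x) dx`, and `sin` is odd. Against `g₁ = 1` one needs
`∫ (1 + sin x)⁻² dx = 6√3` and `∫ (1 + sin x)⁻³ dx = 132√3/5`, which come from the reduction formula
`(cos x / (1 + sin x)ⁿ⁺¹)' = n (1 + sin x)⁻ⁿ - (2n + 1) (1 + sin x)⁻ⁿ⁻¹`; the value
`a⁴ = 198√3/(5π)` is exactly what makes the result `a (1 + s)`.
-/

open Set MeasureTheory Real

noncomputable def aConst : ℝ := (198 * Real.sqrt 3 / (5 * π)) ^ ((4:ℝ)⁻¹)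

noncomputable def K7 (t u : ℝ) : ℝ :=
  (1 - (22/17) * Real.sin (π * (2*t - 1) / 3) * Real.sin (π * (2*u - 1) / 3)) /
    (aConst ^ 3 * (1 + Real.sin (π * (2*u - 1) / 3)) ^ 3)

lemma hasDerivAt_cos_div_one_add_sin_pow (n : ℕ) {x : ℝ} (h : 1 + sin x ≠ 0) :
    HasDerivAt (fun x => cos x / (1 + sin x) ^ (n + 1))
      (n * ((1 + sin x) ^ n)⁻¹ - (2 * n + 1) * ((1 + sin x) ^ (n + 1))⁻¹) x := by
  have hden := ((hasDerivAt_sin x).const_add 1).fun_pow (n + 1)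
  refine ((hasDerivAt_cos x).div hden (pow_ne_zero _ h)).congr_deriv ?_
  have hy : (1 + sin x) ^ n ≠ 0 := pow_ne_zero _ h
  rw [Nat.add_sub_cancel, pow_succ]
  field_simp
  push_cast
  linear_combination -(n + 1 : ℝ) * sin_sq_add_cos_sq x

lemma intervalIntegrable_inv_one_add_sin_pow {a b : ℝ} (h : ∀ x ∈ uIcc a b, 1 + sin x ≠ 0)
    (n : ℕ) : IntervalIntegrable (fun x => ((1 + sin x) ^ n)⁻¹) volume a b :=
  ContinuousOn.intervalIntegrable <|
    ((continuous_const.add continuous_sin).pow n).continuousOn.inv₀ fun x hx =>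
      pow_ne_zero n (h x hx)

lemma integral_inv_one_add_sin_pow_succ {a b : ℝ} (h : ∀ x ∈ uIcc a b, 1 + sin x ≠ 0)
    (n : ℕ) :
    (2 * n + 1) * ∫ x in a..b, ((1 + sin x) ^ (n + 1))⁻¹ =
      n * (∫ x in a..b, ((1 + sin x) ^ n)⁻¹) -
        (cos b / (1 + sin b) ^ (n + 1) - cos a / (1 + sin a) ^ (n + 1)) := by
  have hn := (intervalIntegrable_inv_one_add_sin_pow h n).const_mul (n : ℝ)
  have hn1 := (intervalIntegrable_inv_one_add_sin_pow h (n + 1)).const_mul (2 * n + 1 : ℝ)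
  have hftc := intervalIntegral.integral_eq_sub_of_hasDerivAt
    (fun x hx => hasDerivAt_cos_div_one_add_sin_pow n (h x hx)) (hn.sub hn1)
  rw [intervalIntegral.integral_sub hn hn1, intervalIntegral.integral_const_mul,
    intervalIntegral.integral_const_mul] at hftc
  linarith

lemma one_add_sin_pos_of_mem_Ioo {x : ℝ} (hx : x ∈ Ioo (-(π / 2)) (π / 2)) :
    0 < 1 + sin x := by
  have hcos := cos_pos_of_mem_Ioo hx
  nlinarith [sin_sq_add_cos_sq x, neg_one_le_sin x]

lemma one_add_sin_pos_of_mem_Icc {x : ℝ} (hx : x ∈ Icc (-(π / 3)) (π / 3)) :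
    0 < 1 + sin x :=
  one_add_sin_pos_of_mem_Ioo ⟨by linarith [hx.1, pi_pos], by linarith [hx.2, pi_pos]⟩

lemma one_add_sin_ne_zero_of_mem_uIcc {x : ℝ} (hx : x ∈ uIcc (-(π / 3)) (π / 3)) :
    1 + sin x ≠ 0 := by
  rw [uIcc_of_le (by linarith [pi_pos])] at hx
  exact (one_add_sin_pos_of_mem_Icc hx).ne'

lemma cos_div_one_add_sin_pow_pi_div_three (k : ℕ) :
    cos (π / 3) / (1 + sin (π / 3)) ^ k = (4 - 2 * √3) ^ k / 2 := by
  have h : (1 + √3 / 2)⁻¹ = 4 - 2 * √3 :=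
    inv_eq_of_mul_eq_one_right (by linear_combination -sq_sqrt (zero_le_three (α := ℝ)))
  rw [cos_pi_div_three, sin_pi_div_three, div_eq_mul_inv, ← inv_pow, h]
  ring

lemma cos_div_one_add_sin_pow_neg_pi_div_three (k : ℕ) :
    cos (-(π / 3)) / (1 + sin (-(π / 3))) ^ k = (4 + 2 * √3) ^ k / 2 := by
  have h : (1 + -(√3 / 2))⁻¹ = 4 + 2 * √3 :=
    inv_eq_of_mul_eq_one_right (by linear_combination -sq_sqrt (zero_le_three (α := ℝ)))
  rw [cos_neg, sin_neg, cos_pi_div_three, sin_pi_div_three, div_eq_mul_inv, ← inv_pow, h]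
  ring

lemma integral_inv_one_add_sin_pow_two :
    ∫ x in -(π / 3)..π / 3, ((1 + sin x) ^ 2)⁻¹ = 6 * √3 := by
  have r1 := integral_inv_one_add_sin_pow_succ (fun _ => one_add_sin_ne_zero_of_mem_uIcc) 0
  have r2 := integral_inv_one_add_sin_pow_succ (fun _ => one_add_sin_ne_zero_of_mem_uIcc) 1
  simp only [cos_div_one_add_sin_pow_pi_div_three, cos_div_one_add_sin_pow_neg_pi_div_three] at r1 r2
  norm_num at r1 r2
  linear_combination r2 / 3 + r1 / 3

lemma integral_inv_one_add_sin_pow_three :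
    ∫ x in -(π / 3)..π / 3, ((1 + sin x) ^ 3)⁻¹ = 132 * √3 / 5 := by
  have r3 := integral_inv_one_add_sin_pow_succ (fun _ => one_add_sin_ne_zero_of_mem_uIcc) 2
  simp only [cos_div_one_add_sin_pow_pi_div_three, cos_div_one_add_sin_pow_neg_pi_div_three,
    integral_inv_one_add_sin_pow_two] at r3
  norm_num at r3
  linear_combination r3 / 5 + (8 / 5 * √3) * sq_sqrt (zero_le_three (α := ℝ))

lemma integral_comp_pi_mul_two_mul_sub_one_div_three (f : ℝ → ℝ) :
    ∫ u in (0:ℝ)..1, f (π * (2 * u - 1) / 3) = 3 / (2 * π) * ∫ x in -(π / 3)..π / 3, f x := by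
  have h : ∀ u : ℝ, π * (2 * u - 1) / 3 = 2 * π / 3 * u - π / 3 := fun u => by ring
  simp only [h]
  rw [intervalIntegral.integral_comp_mul_sub _ (by positivity), smul_eq_mul]
  congr 1 <;> ring_nf

lemma aConst_pos : 0 < aConst := rpow_pos_of_pos (by positivity) _

lemma aConst_pow_four : aConst ^ 4 = 198 * √3 / (5 * π) := by
  exact_mod_cast rpow_inv_natCast_pow (by positivity : (0:ℝ) ≤ 198 * √3 / (5 * π)) four_ne_zero

lemma aConst_ne_one : aConst ≠ 1 := by
  intro h
  have h4 := aConst_pow_four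
  rw [h, one_pow, eq_div_iff (by positivity)] at h4
  nlinarith [pi_le_four, one_le_sqrt.mpr (by norm_num : (1:ℝ) ≤ 3)]

lemma integral_one_sub_mul_sin_pi_div_three (c : ℝ) :
    ∫ x in -(π / 3)..π / 3, (1 - c * sin x) = 2 * π / 3 := by
  rw [intervalIntegral.integral_sub intervalIntegrable_const
      ((continuous_sin.intervalIntegrable _ _).const_mul c),
    intervalIntegral.integral_const_mul, integral_sin, cos_neg]
  simp only [intervalIntegral.integral_const, smul_eq_mul, mul_one, sub_self, mul_zero, sub_zero]
  ring

lemma integral_K7_mul_cube (t : ℝ) :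
    ∫ u in (0:ℝ)..1, K7 t u * (aConst * (1 + sin (π * (2 * u - 1) / 3))) ^ 3 = 1 := by
  unfold K7
  set c := 22 / 17 * sin (π * (2 * t - 1) / 3)
  have hcancel : EqOn (fun x => (1 - c * sin x) / (aConst ^ 3 * (1 + sin x) ^ 3) *
      (aConst * (1 + sin x)) ^ 3) (fun x => 1 - c * sin x) (uIcc (-(π / 3)) (π / 3)) := by
    intro x hx
    have := one_add_sin_ne_zero_of_mem_uIcc hx
    have := aConst_pos.ne'
    field_simp
  rw [integral_comp_pi_mul_two_mul_sub_one_div_three (fun x => (1 - c * sin x) /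
      (aConst ^ 3 * (1 + sin x) ^ 3) * (aConst * (1 + sin x)) ^ 3),
    intervalIntegral.integral_congr hcancel, integral_one_sub_mul_sin_pi_div_three]
  field_simp

lemma integral_K7 (t : ℝ) :
    ∫ u in (0:ℝ)..1, K7 t u = aConst * (1 + sin (π * (2 * t - 1) / 3)) := by
  unfold K7
  set s := sin (π * (2 * t - 1) / 3)
  have hsplit : EqOn (fun x => (1 - 22 / 17 * s * sin x) / (aConst ^ 3 * (1 + sin x) ^ 3))
      (fun x => (aConst ^ 3)⁻¹ * ((1 + 22 / 17 * s) * ((1 + sin x) ^ 3)⁻¹ -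
        22 / 17 * s * ((1 + sin x) ^ 2)⁻¹)) (uIcc (-(π / 3)) (π / 3)) := by
    intro x hx
    have := one_add_sin_ne_zero_of_mem_uIcc hx
    have := aConst_pos.ne'
    field_simp
    ring
  have hint (n : ℕ) := intervalIntegrable_inv_one_add_sin_pow
    (fun _ => one_add_sin_ne_zero_of_mem_uIcc) n
  rw [integral_comp_pi_mul_two_mul_sub_one_div_three (fun x => (1 - 22 / 17 * s * sin x) /
      (aConst ^ 3 * (1 + sin x) ^ 3)),
    intervalIntegral.integral_congr hsplit, intervalIntegral.integral_const_mul,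
    intervalIntegral.integral_sub ((hint 3).const_mul _) ((hint 2).const_mul _),
    intervalIntegral.integral_const_mul, intervalIntegral.integral_const_mul,
    integral_inv_one_add_sin_pow_three, integral_inv_one_add_sin_pow_two]
  have := aConst_pos.ne'
  have := pi_pos.ne'
  have h4 : aConst ^ 4 * (5 * π) = 198 * √3 := by
    rw [aConst_pow_four]; field_simp
  field_simp
  linear_combination (-34 * (1 + s)) * h4

theorem stmt_15
    (f₁ g₁ : ℝ → ℝ)
    (hf₁ : f₁ = fun t => aConst * (1 + Real.sin (π * (2*t - 1) / 3)))
    (hg₁ : g₁ = fun _ => (1:ℝ)) :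
    ContinuousOn f₁ (Icc 0 1) ∧ ContinuousOn g₁ (Icc 0 1) ∧
    (∀ t ∈ Icc (0:ℝ) 1, 0 < f₁ t) ∧ (∀ t ∈ Icc (0:ℝ) 1, 0 < g₁ t) ∧
    (∃ t ∈ Icc (0:ℝ) 1, f₁ t ≠ g₁ t) ∧
    (∀ t ∈ Icc (0:ℝ) 1,
      (∫ u in (0:ℝ)..1, K7 t u * f₁ u ^ 3) = g₁ t ∧
      (∫ u in (0:ℝ)..1, K7 t u * g₁ u ^ 3) = f₁ t) ∧
    (∀ t ∈ Icc (0:ℝ) 1,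
      (∫ u in (0:ℝ)..1, K7 t u * g₁ u ^ 3) = f₁ t ∧
      (∫ u in (0:ℝ)..1, K7 t u * f₁ u ^ 3) = g₁ t) := by
  subst hf₁ hg₁
  simp only [one_pow, mul_one, integral_K7, integral_K7_mul_cube, and_self, implies_true, and_true]
  refine ⟨by fun_prop, continuousOn_const, fun t ht => ?_, fun _ _ => one_pos,
    ⟨1 / 2, by norm_num, ?_⟩⟩
  · have hx : π * (2 * t - 1) / 3 ∈ Icc (-(π / 3)) (π / 3) :=
      ⟨by nlinarith [pi_pos, ht.1], by nlinarith [pi_pos, ht.2]⟩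
    exact mul_pos aConst_pos (one_add_sin_pos_of_mem_Icc hx)
  · norm_num [aConst_ne_one]
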